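/- arXiv:1710.07070 — 6 statements merged into one kernel-verified Lean document; each statement's English description precedes it below -/
import Mathlib

section
/- Let E be a Polish space and let d be a totally bounded metric on E inducing its topology. Then the unit ball 𝔅𝔏₁(E), defined with respect to d, is separable with respect to the supremum norm ‖·‖_∞. -/
/-!
Every element of `𝔅𝔏₁(E)` is `1`-Lipschitz with values in `[-1, 1]`. Two `K`-Lipschitz functions
whose values on a `δ`-net of `E` differ by at most `η` are `η + 2Kδ`-close in the sup norm. As the
net can be taken finite and the values lie in a totally bounded set, finitely many patterns of
values on the net approximate all of `𝔅𝔏₁(E)` (the Arzelà–Ascoli argument): `𝔅𝔏₁(E)` is totally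
bounded for the sup norm, hence separable.
-/

open scoped NNReal

/-- The unit ball `𝔅𝔏₁(E)` of the space of bounded Lipschitz functions on a metric space `E`,
viewed inside the space of bounded continuous functions: those `f` with
`‖f‖_∞ + ‖f‖_L ≤ 1`, i.e. admitting a Lipschitz constant `K` with `‖f‖_∞ + K ≤ 1`. -/
def BLball (E : Type*) [PseudoMetricSpace E] : Set (BoundedContinuousFunction E ℝ) :=
  {f | ∃ K : ℝ≥0, LipschitzWith K f ∧ ‖f‖ + (K : ℝ) ≤ 1}

open scoped BoundedContinuousFunction
open Metric Set

section

variable {α β : Type*} [PseudoMetricSpace α] [PseudoMetricSpace β]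

theorem LipschitzWith.dist_le_dist_add {f g : α → β} {K : ℝ≥0} (hf : LipschitzWith K f)
    (hg : LipschitzWith K g) (x z : α) :
    dist (f x) (g x) ≤ dist (f z) (g z) + 2 * K * dist x z := by
  calc dist (f x) (g x) ≤ dist (f x) (f z) + dist (f z) (g z) + dist (g z) (g x) :=
        dist_triangle4 _ _ _ _
    _ ≤ K * dist x z + dist (f z) (g z) + K * dist z x := by
        gcongr
        · exact hf.dist_le_mul x z
        · exact hg.dist_le_mul z x
    _ = dist (f z) (g z) + 2 * K * dist x z := by rw [dist_comm z x]; ring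

theorem BoundedContinuousFunction.totallyBounded_setOf_lipschitzWith
    (hα : TotallyBounded (univ : Set α)) {t : Set β} (ht : TotallyBounded t) (K : ℝ≥0) :
    TotallyBounded {f : α →ᵇ β | LipschitzWith K f ∧ ∀ x, f x ∈ t} := by
  refine totallyBounded_of_finite_discretization fun ε hε => ?_
  obtain ⟨δ, hδ, hKδ⟩ := exists_pos_mul_lt (by positivity : 0 < ε / 4) K
  obtain ⟨s, -, hs, hs_cover⟩ := finite_approx_of_totallyBounded hα δ hδ
  obtain ⟨t', -, ht', ht'_cover⟩ := finite_approx_of_totallyBounded ht (ε / 8) (by positivity)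
  have near_net : ∀ z : α, ∃ w : s, dist z w < δ := fun z => by
    simpa using hs_cover (mem_univ z)
  have near_grid : ∀ b : t, ∃ y : t', dist (b : β) y < ε / 8 := fun b => by
    simpa using ht'_cover b.2
  choose w hw using near_net
  choose grid hgrid using near_grid
  have := hs.to_subtype
  have := ht'.to_subtype
  refine ⟨s → t', Fintype.ofFinite _, fun f z => grid ⟨f.1 z, f.2.2 z⟩, fun f g hfg => ?_⟩
  have hclose (z : s) : dist (f.1 z) (g.1 z) < ε / 4 := by
    have hz := congrFun hfg z
    calc dist (f.1 z) (g.1 z) ≤ dist (f.1 z) (grid ⟨f.1 z, f.2.2 z⟩)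
          + dist (g.1 z) (grid ⟨g.1 z, g.2.2 z⟩) := by
          simp only at hz
          rw [hz]
          exact dist_triangle_right _ _ _
      _ < ε / 8 + ε / 8 := add_lt_add (hgrid ⟨_, _⟩) (hgrid ⟨_, _⟩)
      _ = ε / 4 := by ring
  refine lt_of_le_of_lt ((BoundedContinuousFunction.dist_le (by positivity)).2 fun x => ?_)
    (by linarith : 3 * ε / 4 < ε)
  calc dist (f.1 x) (g.1 x) ≤ dist (f.1 (w x)) (g.1 (w x)) + 2 * K * dist x (w x) :=
        f.2.1.dist_le_dist_add g.2.1 x (w x)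
    _ ≤ ε / 4 + 2 * (ε / 4) := by
        have hKx : K * dist x (w x) ≤ ε / 4 :=
          (mul_le_mul_of_nonneg_left (hw x).le K.2).trans hKδ.le
        rw [mul_assoc]
        exact add_le_add (hclose _).le (by linarith)
    _ = 3 * ε / 4 := by ring

theorem BLball_subset_setOf_lipschitzWith_one :
    BLball α ⊆ {f | LipschitzWith 1 f ∧ ∀ x, f x ∈ closedBall 0 1} := by
  rintro f ⟨K, hK, hsum⟩
  refine ⟨hK.weaken ?_, fun x => ?_⟩
  · exact_mod_cast (le_add_of_nonneg_left (norm_nonneg f)).trans hsum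
  · rw [mem_closedBall_zero_iff]
    exact (f.norm_coe_le_norm x).trans ((le_add_of_nonneg_right K.2).trans hsum)

end

theorem blBall_separable_of_totallyBounded_general (E : Type*) [MetricSpace E]
    (hd : TotallyBounded (Set.univ : Set E)) :
    TopologicalSpace.IsSeparable (BLball E) :=
  ((BoundedContinuousFunction.totallyBounded_setOf_lipschitzWith hd
    (isCompact_closedBall (0 : ℝ) 1).totallyBounded 1).subset
    BLball_subset_setOf_lipschitzWith_one).isSeparable

/-- If `E` is a Polish space and `d` is a totally bounded metric on `E` inducing its topology,
then the unit ball `𝔅𝔏₁(E)` (defined via `d`) is separable for the supremum norm. -/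
theorem blBall_separable_of_totallyBounded (E : Type*) [MetricSpace E] [PolishSpace E]
    (hd : TotallyBounded (Set.univ : Set E)) :
    TopologicalSpace.IsSeparable (BLball E) :=
  blBall_separable_of_totallyBounded_general E hd
end

section
/- A sequence μ₁, μ₂, … in 𝔐₁^ψ(E) converges to μ₀ ∈ 𝔐₁^ψ(E) in the ψ-weak topology if and only if μ_n → μ₀ in the weak topology and ∫ψ dμ_n → ∫ψ dμ₀, as n → ∞. -/
open MeasureTheory Filter Topology
open scoped ENNReal NNReal

/-- The one-sided Prohorov distance
`π(μ,ν) = inf {ε > 0 : μ(B) ≤ ν(Bᵉ) + ε for every Borel set B}`. -/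
noncomputable def prohorovDist {E : Type*} [PseudoMetricSpace E] [MeasurableSpace E]
    (μ ν : MeasureTheory.Measure E) : ℝ :=
  sInf {ε : ℝ | 0 < ε ∧ ∀ B : Set E, MeasurableSet B →
    μ B ≤ ν (Metric.thickening ε B) + ENNReal.ofReal ε}

/-- The distance `d_ψ(μ,ν) = π(μ,ν) + |∫ψ dμ − ∫ψ dν|`. -/
noncomputable def dPsi {E : Type*} [PseudoMetricSpace E] [MeasurableSpace E] (ψ : E → ℝ)
    (μ ν : MeasureTheory.Measure E) : ℝ :=
  prohorovDist μ ν + |(∫ x, ψ x ∂μ) - ∫ x, ψ x ∂ν|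

/-- The space `𝔐₁^ψ(E)` of Borel probability measures integrating the gauge `ψ`. -/
abbrev MPsi (E : Type*) [MeasurableSpace E] (ψ : E → ℝ) : Type _ :=
  {μ : MeasureTheory.ProbabilityMeasure E // MeasureTheory.Integrable ψ (μ : MeasureTheory.Measure E)}

/-- The `ψ`-weak topology on `𝔐₁^ψ(E)`: the coarsest topology making `μ ↦ ∫ f dμ`
continuous for every continuous `f : E → ℝ` with `|f| ≤ C·ψ` for some constant `C`. -/
noncomputable def psiWeakTopology (E : Type*) [MeasurableSpace E] [TopologicalSpace E]
    (ψ : E → ℝ) : TopologicalSpace (MPsi E ψ) :=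
  ⨅ f : {f : E → ℝ // Continuous f ∧ ∃ C : ℝ, ∀ x, |f x| ≤ C * ψ x},
    TopologicalSpace.induced (fun μ => ∫ x, f.1 x ∂(μ.1 : MeasureTheory.Measure E)) inferInstance

/-!
Bounded continuous functions and `ψ` itself are `ψ`-dominated, which gives one direction.
Conversely, for a nonnegative continuous `g`, `ν ↦ ∫ g dν` is lower semicontinuous under weak
convergence: the truncations `min g m` are bounded continuous and their integrals increase to
`∫ g dν`. If `|f| ≤ C ψ`, both `C ψ + f` and `C ψ - f` are nonnegative, and since `∫ C ψ dμₙ`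
converges, lower semicontinuity of their integrals bounds `∫ f dμₙ` from below and from above.
-/

open scoped BoundedContinuousFunction

section

variable {Ω : Type*} [MeasurableSpace Ω]

theorem integrable_min_const {μ : Measure Ω} {g : Ω → ℝ} (hg : Integrable g μ) {m : ℝ}
    (hm : 0 ≤ m) : Integrable (fun x => min (g x) m) μ :=
  hg.mono (hg.aestronglyMeasurable.inf aestronglyMeasurable_const) <| ae_of_all _ fun x => by
    simp only [Real.norm_eq_abs]
    exact abs_le.2 ⟨le_min (neg_abs_le _) ((neg_nonpos.2 (abs_nonneg _)).trans hm),
      (min_le_left _ _).trans (le_abs_self _)⟩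

theorem tendsto_integral_min_natCast {μ : Measure Ω} {g : Ω → ℝ} (hg : Integrable g μ) :
    Tendsto (fun m : ℕ => ∫ x, min (g x) m ∂μ) atTop (𝓝 (∫ x, g x ∂μ)) :=
  integral_tendsto_of_tendsto_of_monotone (fun m => integrable_min_const hg m.cast_nonneg) hg
    (ae_of_all _ fun _ _ _ hmn => min_le_min_left _ (Nat.cast_le.2 hmn))
    (ae_of_all _ fun x => tendsto_const_nhds.congr' <|
      (eventually_ge_atTop ⌈g x⌉₊).mono fun _ hm =>
        (min_eq_left ((Nat.le_ceil _).trans (Nat.cast_le.2 hm))).symm)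

namespace MeasureTheory.ProbabilityMeasure

variable [TopologicalSpace Ω] [OpensMeasurableSpace Ω] {ι : Type*} {L : Filter ι}
  {μs : ι → ProbabilityMeasure Ω} {μ : ProbabilityMeasure Ω}

theorem eventually_lt_integral_of_tendsto (hμs : Tendsto μs L (𝓝 μ)) {g : Ω → ℝ}
    (hgc : Continuous g) (hg0 : 0 ≤ g) (hgμ : Integrable g μ)
    (hgμs : ∀ i, Integrable g (μs i)) {c : ℝ} (hc : c < ∫ x, g x ∂μ) :
    ∀ᶠ i in L, c < ∫ x, g x ∂(μs i : Measure Ω) := by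
  obtain ⟨m, hm⟩ := ((tendsto_integral_min_natCast hgμ).eventually (lt_mem_nhds hc)).exists
  have hgm_mem : ∀ x, min (g x) m ∈ Set.Icc (0 : ℝ) m :=
    fun x => ⟨le_min (hg0 x) m.cast_nonneg, min_le_right _ _⟩
  let gm : Ω →ᵇ ℝ := .mkOfBound ⟨fun x => min (g x) m, hgc.min continuous_const⟩ m fun x y =>
    (Real.dist_le_of_mem_Icc (hgm_mem x) (hgm_mem y)).trans_eq (sub_zero _)
  have hgm := tendsto_iff_forall_integral_tendsto.1 hμs gm
  filter_upwards [hgm.eventually (lt_mem_nhds (show c < ∫ x, gm x ∂μ from hm))] with i hi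
  exact hi.trans_le <| integral_mono (integrable_min_const (hgμs i) m.cast_nonneg) (hgμs i)
    fun x => min_le_left _ _

variable {ψ f : Ω → ℝ} {C : ℝ}

theorem eventually_lt_integral_of_abs_le_mul (hμs : Tendsto μs L (𝓝 μ))
    (hψ : Tendsto (fun i => ∫ x, ψ x ∂(μs i : Measure Ω)) L (𝓝 (∫ x, ψ x ∂μ)))
    (hψc : Continuous ψ) (hfc : Continuous f) (hf : ∀ x, |f x| ≤ C * ψ x)
    (hψμ : Integrable ψ μ) (hψμs : ∀ i, Integrable ψ (μs i)) {a : ℝ}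
    (ha : a < ∫ x, f x ∂μ) : ∀ᶠ i in L, a < ∫ x, f x ∂(μs i : Measure Ω) := by
  have hg_int : ∀ ν : Measure Ω, Integrable ψ ν → Integrable (fun x => C * ψ x + f x) ν ∧
      ∫ x, C * ψ x + f x ∂ν = C * ∫ x, ψ x ∂ν + ∫ x, f x ∂ν := fun ν hψν =>
    have hfν : Integrable f ν := (hψν.const_mul C).mono' hfc.aestronglyMeasurable
      (ae_of_all _ fun x => (Real.norm_eq_abs _).trans_le (hf x))
    ⟨(hψν.const_mul C).add hfν, by rw [integral_add (hψν.const_mul C) hfν, integral_const_mul]⟩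
  have hg0 : 0 ≤ fun x => C * ψ x + f x := fun x =>
    neg_le_iff_add_nonneg'.1 ((neg_le_neg (hf x)).trans (neg_abs_le _))
  have hCψ : ∀ᶠ i in L, C * ∫ x, ψ x ∂(μs i : Measure Ω) <
      C * ∫ x, ψ x ∂μ + (∫ x, f x ∂μ - a) / 2 :=
    (hψ.const_mul C).eventually (gt_mem_nhds (by linarith))
  have hg := eventually_lt_integral_of_tendsto hμs (g := fun x => C * ψ x + f x)
    ((continuous_const.mul hψc).add hfc) hg0
    (hg_int μ hψμ).1 (fun i => (hg_int _ (hψμs i)).1)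
    (c := C * ∫ x, ψ x ∂μ + (a + ∫ x, f x ∂μ) / 2) (by rw [(hg_int μ hψμ).2]; linarith)
  filter_upwards [hCψ, hg] with i hCψi hgi
  rw [(hg_int _ (hψμs i)).2] at hgi
  linarith

theorem tendsto_integral_of_abs_le_mul (hμs : Tendsto μs L (𝓝 μ))
    (hψ : Tendsto (fun i => ∫ x, ψ x ∂(μs i : Measure Ω)) L (𝓝 (∫ x, ψ x ∂μ)))
    (hψc : Continuous ψ) (hfc : Continuous f) (hf : ∀ x, |f x| ≤ C * ψ x)
    (hψμ : Integrable ψ μ) (hψμs : ∀ i, Integrable ψ (μs i)) :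
    Tendsto (fun i => ∫ x, f x ∂(μs i : Measure Ω)) L (𝓝 (∫ x, f x ∂μ)) := by
  refine tendsto_order.2 ⟨fun a ha =>
    eventually_lt_integral_of_abs_le_mul hμs hψ hψc hfc hf hψμ hψμs ha, fun a ha => ?_⟩
  have hneg := eventually_lt_integral_of_abs_le_mul hμs hψ hψc hfc.neg
    (fun x => (abs_neg (f x)).trans_le (hf x)) hψμ hψμs (f := fun x => -f x) (a := -a)
    (by rw [integral_neg]; exact neg_lt_neg ha)
  filter_upwards [hneg] with i hi
  rw [integral_neg] at hi
  exact neg_lt_neg_iff.1 hi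

end MeasureTheory.ProbabilityMeasure

end

theorem tendsto_psiWeakTopology_iff {E : Type*} [MeasurableSpace E] [TopologicalSpace E]
    {ψ : E → ℝ} {ι : Type*} {L : Filter ι} {μs : ι → MPsi E ψ} {μ : MPsi E ψ} :
    Tendsto μs L (@nhds _ (psiWeakTopology E ψ) μ) ↔
      ∀ f : {f : E → ℝ // Continuous f ∧ ∃ C : ℝ, ∀ x, |f x| ≤ C * ψ x},
        Tendsto (fun i => ∫ x, f.1 x ∂((μs i).1 : Measure E)) L
          (𝓝 (∫ x, f.1 x ∂(μ.1 : Measure E))) := by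
  rw [psiWeakTopology, nhds_iInf, tendsto_iInf]
  exact forall_congr' fun f => by rw [nhds_induced, tendsto_comap_iff]; rfl

theorem tendsto_psiWeak_iff_general (E : Type*) [TopologicalSpace E]
    [MeasurableSpace E] [BorelSpace E]
    (ψ : E → ℝ) (hψc : Continuous ψ) (hψ1 : ∀ x, 1 ≤ ψ x)
    (μs : ℕ → MPsi E ψ) (μ0 : MPsi E ψ) :
    Filter.Tendsto μs Filter.atTop (@nhds _ (psiWeakTopology E ψ) μ0) ↔
      (Filter.Tendsto (fun n => (μs n).1) Filter.atTop (nhds μ0.1) ∧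
        Filter.Tendsto (fun n => ∫ x, ψ x ∂((μs n).1 : Measure E)) Filter.atTop
          (nhds (∫ x, ψ x ∂(μ0.1 : Measure E)))) := by
  rw [tendsto_psiWeakTopology_iff]
  constructor
  · intro h
    refine ⟨ProbabilityMeasure.tendsto_iff_forall_integral_tendsto.2 fun g =>
      h ⟨g, g.continuous, ‖g‖, fun x => ?_⟩, h ⟨ψ, hψc, 1, fun x => ?_⟩⟩
    · exact (g.norm_coe_le_norm x).trans (le_mul_of_one_le_right (norm_nonneg g) (hψ1 x))
    · rw [one_mul, abs_of_nonneg (zero_le_one.trans (hψ1 x))]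
  · rintro ⟨hw, hψ⟩ ⟨f, hfc, C, hf⟩
    exact ProbabilityMeasure.tendsto_integral_of_abs_le_mul hw hψ hψc hfc hf μ0.2 fun n => (μs n).2

/-- A sequence `μ₁, μ₂, …` in `𝔐₁^ψ(E)` converges to `μ₀ ∈ 𝔐₁^ψ(E)` in the `ψ`-weak topology
if and only if it converges in the weak topology (of `𝔐₁(E)`) and `∫ψ dμₙ → ∫ψ dμ₀`. -/
theorem tendsto_psiWeak_iff (E : Type*) [TopologicalSpace E] [PolishSpace E]
    [MeasurableSpace E] [BorelSpace E]
    (ψ : E → ℝ) (hψc : Continuous ψ) (hψ1 : ∀ x, 1 ≤ ψ x)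
    (μs : ℕ → MPsi E ψ) (μ0 : MPsi E ψ) :
    Filter.Tendsto μs Filter.atTop (@nhds _ (psiWeakTopology E ψ) μ0) ↔
      (Filter.Tendsto (fun n => (μs n).1) Filter.atTop (nhds μ0.1) ∧
        Filter.Tendsto (fun n => ∫ x, ψ x ∂((μs n).1 : Measure E)) Filter.atTop
          (nhds (∫ x, ψ x ∂(μ0.1 : Measure E)))) :=
  tendsto_psiWeak_iff_general E ψ hψc hψ1 μs μ0
end

section
/- The Borel σ-algebra 𝔐^ψ on 𝔐₁^ψ(E) generated by the ψ-weak topology coincides with the Borel σ-algebra on 𝔐₁^ψ(E) generated by the relative topology inherited from the weak topology on 𝔐₁(E). -/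
open MeasureTheory Filter Topology
open scoped ENNReal NNReal

/-! The ψ-weak topology is the relative weak topology refined by the single map
`I μ = ∫ ψ dμ`. Indeed, for continuous `g ≥ 0` the map `μ ↦ ∫ g dμ` is weakly lower
semicontinuous, being the increasing limit of the continuous maps `μ ↦ ∫ min g n dμ`; writing a
`ψ`-dominated `f` as `(Cψ + f) - Cψ` and as `Cψ - (Cψ - f)` shows that `μ ↦ ∫ f dμ` is both
lower and upper semicontinuous as soon as `I` is continuous. So the ψ-weak topology is induced
by `μ ↦ (μ, I μ)` into a product with `ℝ`, whose Borel σ-algebra is the product σ-algebra because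
`ℝ` is second countable, and `I` is itself Borel for the weak topology, being lower
semicontinuous. -/

section Semicontinuity

variable {X : Type*} [TopologicalSpace X]

lemma lowerSemicontinuous_of_tendsto_of_le {γ : Type*} [LinearOrder γ] [TopologicalSpace γ]
    [OrderTopology γ] {ι : Type*} {l : Filter ι} [l.NeBot] {F : ι → X → γ} {G : X → γ}
    (hF : ∀ i, LowerSemicontinuous (F i)) (hle : ∀ i x, F i x ≤ G x)
    (hlim : ∀ x, Tendsto (F · x) l (𝓝 (G x))) : LowerSemicontinuous G := by
  intro x y hy
  obtain ⟨i, hi⟩ := ((hlim x).eventually (lt_mem_nhds hy)).exists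
  exact (hF i x y hi).mono fun z hz => hz.trans_le (hle i z)

lemma upperSemicontinuous_of_lowerSemicontinuous_neg {γ : Type*} [AddCommGroup γ]
    [LinearOrder γ] [IsOrderedAddMonoid γ] [TopologicalSpace γ] {f : X → γ}
    (hf : LowerSemicontinuous fun x => -f x) : UpperSemicontinuous f :=
  fun x y hy => (hf x (-y) (neg_lt_neg hy)).mono fun _ hz => neg_lt_neg_iff.mp hz

end Semicontinuity

lemma borel_inf_induced_eq_borel {X Y : Type*} [t : TopologicalSpace X] [TopologicalSpace Y]
    [SecondCountableTopology Y] [MeasurableSpace Y] [BorelSpace Y] {f : X → Y}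
    (hf : Measurable[borel X] f) :
    @borel X (t ⊓ TopologicalSpace.induced f inferInstance) = borel X := by
  let _ : MeasurableSpace X := borel X
  have : BorelSpace X := ⟨rfl⟩
  have hgraph : t ⊓ TopologicalSpace.induced f inferInstance =
      TopologicalSpace.induced (fun x => (x, f x)) inferInstance := by
    rw [instTopologicalSpaceProd, induced_inf, induced_compose, induced_compose]
    exact congrArg (· ⊓ _) induced_id.symm
  rw [hgraph, borel_comap, ← BorelSpace.measurable_eq, Prod.instMeasurableSpace,
    MeasurableSpace.prod, MeasurableSpace.comap_sup, MeasurableSpace.comap_comp,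
    MeasurableSpace.comap_comp]
  exact (congrArg (· ⊔ _) MeasurableSpace.comap_id).trans (sup_eq_left.2 hf.comap_le)

section Integral

variable {E : Type*} [TopologicalSpace E]

noncomputable def truncateBCF {g : E → ℝ} (hg : Continuous g) (hg0 : ∀ x, 0 ≤ g x) (n : ℕ) :
    BoundedContinuousFunction E ℝ :=
  .ofNormedAddCommGroup (fun x => min (g x) n) (hg.min continuous_const) n fun x => by
    rw [Real.norm_eq_abs, abs_of_nonneg (le_min (hg0 x) n.cast_nonneg)]
    exact min_le_right _ _

lemma truncateBCF_apply {g : E → ℝ} (hg : Continuous g) (hg0 : ∀ x, 0 ≤ g x) (n : ℕ) (x : E) :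
    truncateBCF hg hg0 n x = min (g x) n :=
  rfl

variable [MeasurableSpace E] [OpensMeasurableSpace E]

lemma tendsto_integral_truncateBCF {g : E → ℝ} (hg : Continuous g) (hg0 : ∀ x, 0 ≤ g x)
    {μ : Measure E} (hint : Integrable g μ) :
    Tendsto (fun n => ∫ x, truncateBCF hg hg0 n x ∂μ) atTop (𝓝 (∫ x, g x ∂μ)) := by
  refine tendsto_integral_of_dominated_convergence g
    (fun n => (truncateBCF hg hg0 n).continuous.aestronglyMeasurable) hint
    (fun n => ae_of_all _ fun x => ?_) (ae_of_all _ fun x => ?_)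
  · rw [truncateBCF_apply, Real.norm_eq_abs, abs_of_nonneg (le_min (hg0 x) (Nat.cast_nonneg n))]
    exact min_le_left _ _
  · refine tendsto_const_nhds.congr' ?_
    filter_upwards [eventually_ge_atTop ⌈g x⌉₊] with n hn
    exact ((truncateBCF_apply hg hg0 n x).trans
      (min_eq_left ((Nat.le_ceil _).trans (Nat.cast_le.2 hn)))).symm

variable {X : Type*} [TopologicalSpace X] {μ : X → ProbabilityMeasure E}

lemma lowerSemicontinuous_integral_comp (hμ : Continuous μ) {g : E → ℝ} (hg : Continuous g)
    (hg0 : ∀ x, 0 ≤ g x) (hint : ∀ x, Integrable g (μ x)) :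
    LowerSemicontinuous fun x => ∫ y, g y ∂(μ x) := by
  refine lowerSemicontinuous_of_tendsto_of_le (l := atTop)
    (fun n => (ProbabilityMeasure.continuous_iff_forall_continuous_integral.1 hμ
      (truncateBCF hg hg0 n)).lowerSemicontinuous)
    (fun n x => integral_mono ((truncateBCF hg hg0 n).integrable _) (hint x)
      fun y => min_le_left _ _)
    fun x => tendsto_integral_truncateBCF hg hg0 (hint x)

lemma continuous_integral_of_abs_le_mul (hμ : Continuous μ) {ψ f : E → ℝ} (hψc : Continuous ψ)
    (hψint : ∀ x, Integrable ψ (μ x)) (hψ : Continuous fun x => ∫ y, ψ y ∂(μ x))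
    (hf : Continuous f) {C : ℝ} (hfC : ∀ y, |f y| ≤ C * ψ y) :
    Continuous fun x => ∫ y, f y ∂(μ x) := by
  have lsc : ∀ g : E → ℝ, Continuous g → (∀ y, |g y| ≤ C * ψ y) →
      LowerSemicontinuous fun x => ∫ y, g y ∂(μ x) := by
    intro g hg hgC
    have hint x : Integrable g (μ x) :=
      ((hψint x).const_mul C).mono' hg.aestronglyMeasurable (ae_of_all _ hgC)
    have hshift : (fun x => ∫ y, g y ∂(μ x)) =
        fun x => ∫ y, C * ψ y + g y ∂(μ x) + -(C * ∫ y, ψ y ∂(μ x)) := by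
      ext x
      rw [integral_add ((hψint x).const_mul C) (hint x), integral_const_mul]
      ring
    rw [hshift]
    refine .add (lowerSemicontinuous_integral_comp hμ ((hψc.const_mul C).add hg)
      (fun y => ?_) fun x => ((hψint x).const_mul C).add (hint x))
      (hψ.const_mul C).neg.lowerSemicontinuous
    linarith [neg_abs_le (g y), hgC y]
  refine continuous_iff_lower_upperSemicontinuous.2
    ⟨lsc f hf hfC, upperSemicontinuous_of_lowerSemicontinuous_neg ?_⟩
  simpa only [integral_neg] using lsc (fun y => -f y) hf.neg (by simpa only [abs_neg] using hfC)

end Integral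

section PsiWeak

variable {E : Type*} [TopologicalSpace E] [MeasurableSpace E] {ψ : E → ℝ}

lemma continuous_integral_psiWeak {f : E → ℝ} (hf : Continuous f) {C : ℝ}
    (hfC : ∀ x, |f x| ≤ C * ψ x) :
    Continuous[psiWeakTopology E ψ, _] fun μ : MPsi E ψ => ∫ x, f x ∂(μ.1 : Measure E) :=
  continuous_iff_le_induced.2 <|
    iInf_le (ι := {f : E → ℝ // Continuous f ∧ ∃ C : ℝ, ∀ x, |f x| ≤ C * ψ x}) _ ⟨f, hf, C, hfC⟩

lemma psiWeakTopology_eq_inf_induced_integral [OpensMeasurableSpace E] (hψc : Continuous ψ)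
    (hψ1 : ∀ x, 1 ≤ ψ x) :
    psiWeakTopology E ψ = instTopologicalSpaceSubtype ⊓
      TopologicalSpace.induced (fun μ : MPsi E ψ => ∫ x, ψ x ∂(μ.1 : Measure E)) inferInstance := by
  refine le_antisymm (le_inf ?_ ?_) (le_iInf fun f => ?_)
  · let _ := psiWeakTopology E ψ
    refine continuous_iff_le_induced.1 <|
      ProbabilityMeasure.continuous_iff_forall_continuous_integral.2 fun g => ?_
    refine continuous_integral_psiWeak g.continuous (C := ‖g‖) fun x => ?_
    exact (g.norm_coe_le_norm x).trans (le_mul_of_one_le_right (norm_nonneg g) (hψ1 x))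
  · let _ := psiWeakTopology E ψ
    refine continuous_iff_le_induced.1 <| continuous_integral_psiWeak hψc (C := 1) fun x => ?_
    rw [one_mul, abs_of_nonneg (zero_le_one.trans (hψ1 x))]
  · obtain ⟨hf, C, hfC⟩ := f.2
    let _ := instTopologicalSpaceSubtype ⊓
      TopologicalSpace.induced (fun μ : MPsi E ψ => ∫ x, ψ x ∂(μ.1 : Measure E)) inferInstance
    exact continuous_iff_le_induced.1 <| continuous_integral_of_abs_le_mul
      (continuous_inf_dom_left continuous_subtype_val)
      hψc (fun μ => μ.2) (continuous_inf_dom_right continuous_induced_dom) hf hfC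

end PsiWeak

theorem borel_psiWeak_eq_borel_relative_weak_general (E : Type*) [TopologicalSpace E]
    [MeasurableSpace E] [BorelSpace E]
    (ψ : E → ℝ) (hψc : Continuous ψ) (hψ1 : ∀ x, 1 ≤ ψ x) :
    @borel (MPsi E ψ) (psiWeakTopology E ψ) = borel (MPsi E ψ) := by
  rw [psiWeakTopology_eq_inf_induced_integral hψc hψ1]
  refine borel_inf_induced_eq_borel ?_
  borelize (MPsi E ψ)
  exact (lowerSemicontinuous_integral_comp continuous_subtype_val hψc
    (fun x => zero_le_one.trans (hψ1 x)) fun μ => μ.2).measurable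

/-- The Borel σ-algebra on `𝔐₁^ψ(E)` generated by the `ψ`-weak topology coincides with the
Borel σ-algebra generated by the relative topology inherited from the weak topology on
`𝔐₁(E)` (the subtype topology, which is the default instance on `MPsi E ψ`). -/
theorem borel_psiWeak_eq_borel_relative_weak (E : Type*) [TopologicalSpace E] [PolishSpace E]
    [MeasurableSpace E] [BorelSpace E]
    (ψ : E → ℝ) (hψc : Continuous ψ) (hψ1 : ∀ x, 1 ≤ ψ x) :
    @borel (MPsi E ψ) (psiWeakTopology E ψ) = borel (MPsi E ψ) :=
  borel_psiWeak_eq_borel_relative_weak_general E ψ hψc hψ1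
end

section
/- (Varadarajan) If the coordinate variables ξ₁, ξ₂, … are independent with common law μ ∈ 𝔐₁(E), then ℙ-almost surely the empirical measures m_n converge to μ in the weak topology, as n → ∞. -/
open MeasureTheory Filter Topology
open scoped ENNReal NNReal

/-- The empirical measure `m_{n+1}(ω) = (n+1)⁻¹ ∑_{i=0}^{n} δ_{ω i}` of the first `n+1`
observations (coordinates) of the sequence `ω : ℕ → E`. -/
noncomputable def empMeasure (E : Type*) [MeasurableSpace E] (n : ℕ) (ω : ℕ → E) :
    MeasureTheory.Measure E :=
  ((n : ℝ≥0∞) + 1)⁻¹ • ∑ i ∈ Finset.range (n + 1), MeasureTheory.Measure.dirac (ω i)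

/-- The empirical measure as a probability measure. -/
noncomputable def empirical (E : Type*) [MeasurableSpace E] (n : ℕ) (ω : ℕ → E) :
    MeasureTheory.ProbabilityMeasure E :=
  ⟨empMeasure E n ω, by
    constructor
    simp [empMeasure, Measure.smul_apply, Finset.sum_apply]
    rw [ENNReal.inv_mul_cancel] <;> simp⟩

/-!
For a fixed Borel set `A`, `m_n(A)` is the sample mean of the i.i.d. indicators `1_A(ξ_i)`, so
`m_n(A) → μ(A)` almost surely by the strong law of large numbers. Since `E` is second countable,
only countably many sets are needed: the finite unions of sets of a countable basis. Outside a null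
set, `m_n` converges to `μ` on all of them at once, and every open set `G` is approximated from
inside, in `μ`-measure, by such finite unions; hence `μ(G) ≤ liminf m_n(G)`, which is the
portmanteau criterion for weak convergence.
-/

lemma coe_empirical_apply {E : Type*} [MeasurableSpace E] (n : ℕ) (ω : ℕ → E)
    {A : Set E} (hA : MeasurableSet A) :
    ((empirical E n ω A : ℝ≥0) : ℝ)
      = (∑ i ∈ Finset.range (n + 1), A.indicator 1 (ω i)) / ((n + 1 : ℕ) : ℝ) := by
  have h_ind (x : E) : A.indicator (1 : E → ℝ≥0∞) x = ENNReal.ofReal (A.indicator 1 x) := by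
    by_cases hx : x ∈ A <;> simp [hx]
  change (empMeasure E n ω).real A = _
  simp only [empMeasure, measureReal_def, Measure.smul_apply, Measure.finsetSum_apply,
    Measure.dirac_apply' _ hA, smul_eq_mul, ENNReal.toReal_mul, h_ind]
  rw [← ENNReal.ofReal_sum_of_nonneg fun i _ => Set.indicator_nonneg (by simp) _,
    ENNReal.toReal_ofReal (Finset.sum_nonneg fun i _ => Set.indicator_nonneg (by simp) _)]
  simp [div_eq_inv_mul, ← Nat.cast_add_one, -Nat.cast_add]

lemma ae_tendsto_empirical_apply {E : Type*} [MeasurableSpace E] {ℙ : Measure (ℕ → E)}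
    {μ : ProbabilityMeasure E}
    (hindep : Pairwise fun i j =>
      ProbabilityTheory.IndepFun (fun ω : ℕ → E => ω i) (fun ω => ω j) ℙ)
    (hlaw : ∀ i, ℙ.map (fun ω => ω i) = μ) {A : Set E} (hA : MeasurableSet A) :
    ∀ᵐ ω ∂ℙ, Tendsto (fun n => empirical E n ω A) atTop (𝓝 (μ A)) := by
  set f : E → ℝ := A.indicator 1
  have hf : Measurable f := measurable_const.indicator hA
  have hident (i : ℕ) : ProbabilityTheory.IdentDistrib (fun ω : ℕ → E => f (ω i))
      (fun ω => f (ω 0)) ℙ ℙ :=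
    ProbabilityTheory.IdentDistrib.comp (u := f)
      ⟨(measurable_pi_apply i).aemeasurable, (measurable_pi_apply 0).aemeasurable,
        (hlaw i).trans (hlaw 0).symm⟩ hf
  have hint : Integrable (fun ω : ℕ → E => f (ω 0)) ℙ := by
    refine Integrable.comp_measurable (g := f) ?_ (measurable_pi_apply (X := fun _ => E) 0)
    rw [hlaw 0]
    exact (integrable_const 1).indicator hA
  have hmean : ∫ ω, f (ω 0) ∂ℙ = μ A := by
    rw [← integral_map (measurable_pi_apply 0).aemeasurable hf.aestronglyMeasurable, hlaw,
      integral_indicator_one hA]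
    rfl
  have hslln := ProbabilityTheory.strong_law_ae_real (fun i (ω : ℕ → E) => f (ω i)) hint
    (fun i j hij => (hindep hij).comp hf hf) hident
  filter_upwards [hslln] with ω hω
  rw [hmean] at hω
  rw [← NNReal.tendsto_coe]
  simp only [coe_empirical_apply _ _ hA]
  exact hω.comp (tendsto_add_atTop_nat 1)

lemma Set.Countable.setOf_finset_subset {α : Type*} {b : Set α} (hb : b.Countable) :
    {T : Finset α | ↑T ⊆ b}.Countable := by
  refine ((Set.countable_ofPred_finite_subset hb).preimage Finset.coe_injective).mono ?_
  exact fun T hT => ⟨T.finite_toSet, hT⟩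

lemma MeasureTheory.ProbabilityMeasure.tendsto_of_forall_tendsto_apply_biUnion {Ω ι : Type*}
    [MeasurableSpace Ω] [TopologicalSpace Ω] [SecondCountableTopology Ω] [OpensMeasurableSpace Ω]
    {S : Set (Set Ω)} {μ : ι → ProbabilityMeasure Ω} {ν : ProbabilityMeasure Ω}
    {l : Filter ι} [l.IsCountablyGenerated]
    (hS : ∀ u, IsOpen u → ∀ x ∈ u, ∃ s ∈ S, s ∈ 𝓝 x ∧ s ⊆ u)
    (h : ∀ T : Finset (Set Ω), (∀ t ∈ T, t ∈ S) →
      Tendsto (fun i ↦ μ i (⋃ t ∈ T, t)) l (𝓝 (ν (⋃ t ∈ T, t)))) :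
    Tendsto μ l (𝓝 ν) := by
  rcases l.eq_or_neBot with rfl | _
  · simp
  refine tendsto_of_forall_isOpen_le_liminf fun G hG => ?_
  refine (le_liminf_iff (isCoboundedUnder_ge_of_le (x := 1) l (by simp))
    (by isBoundedDefault)).2 fun r hr => ?_
  obtain ⟨T, hTS, hrT, hTG⟩ := ν.exists_lt_measure_biUnion_of_isOpen hS hG hr
  filter_upwards [(tendsto_order.1 (h T hTS)).1 r hrT] with i hi
  exact hi.trans_le (apply_mono _ hTG)

theorem varadarajan_general (E : Type*) [TopologicalSpace E] [PolishSpace E]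
    [MeasurableSpace E] [BorelSpace E]
    (ℙ : Measure (ℕ → E))
    (μ : ProbabilityMeasure E)
    (hindep : ProbabilityTheory.iIndepFun
      (fun i (ω : ℕ → E) => ω i) ℙ)
    (hlaw : ∀ i : ℕ, ℙ.map (fun ω => ω i) = (μ : Measure E)) :
    ∀ᵐ ω ∂ℙ, Filter.Tendsto (fun n => empirical E n ω) Filter.atTop (nhds μ) := by
  obtain ⟨b, hb_count, -, hb⟩ := TopologicalSpace.exists_countable_basis E
  have h_ae : ∀ᵐ ω ∂ℙ, ∀ T ∈ {T : Finset (Set E) | ↑T ⊆ b},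
      Tendsto (fun n => empirical E n ω (⋃ t ∈ T, t)) atTop (𝓝 (μ (⋃ t ∈ T, t))) :=
    (ae_ball_iff hb_count.setOf_finset_subset).2 fun T hT => ae_tendsto_empirical_apply
      (fun i j hij => hindep.indepFun hij) hlaw
      (T.measurableSet_biUnion fun t ht => (hb.isOpen (hT ht)).measurableSet)
  filter_upwards [h_ae] with ω hω
  refine ProbabilityMeasure.tendsto_of_forall_tendsto_apply_biUnion (S := b)
    (fun u hu x hx => ?_) hω
  obtain ⟨s, hsb, hxs, hsu⟩ := hb.exists_subset_of_mem_open hx hu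
  exact ⟨s, hsb, (hb.isOpen hsb).mem_nhds hxs, hsu⟩

/-- **Varadarajan's theorem.** If the coordinate variables `ξ₁, ξ₂, …` on `Ω = E^ℕ` are
independent with common law `μ ∈ 𝔐₁(E)`, then `ℙ`-almost surely the empirical measures `m_n`
converge to `μ` in the weak topology, as `n → ∞`. -/
theorem varadarajan (E : Type*) [TopologicalSpace E] [PolishSpace E]
    [MeasurableSpace E] [BorelSpace E]
    (ℙ : Measure (ℕ → E)) [IsProbabilityMeasure ℙ]
    (μ : ProbabilityMeasure E)
    (hindep : ProbabilityTheory.iIndepFun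
      (fun i (ω : ℕ → E) => ω i) ℙ)
    (hlaw : ∀ i : ℕ, ℙ.map (fun ω => ω i) = (μ : Measure E)) :
    ∀ᵐ ω ∂ℙ, Filter.Tendsto (fun n => empirical E n ω) Filter.atTop (nhds μ) :=
  varadarajan_general E ℙ μ hindep hlaw
end

section
/- The unit ball 𝔅𝔏₁(E) is a universal Glivenko–Cantelli class: whenever the coordinate variables ξ₁, ξ₂, … are independent with common law μ ∈ 𝔐₁(E), one has ℙ-almost surely that sup{ |∫f dm_n − ∫f dμ| : f ∈ 𝔅𝔏₁(E) } → 0, as n → ∞. -/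
open MeasureTheory Filter Topology
open scoped ENNReal NNReal

/-!
By the strong law of large numbers, almost surely the empirical measures converge to `μ` on every
set of a countable π-system of open sets containing a neighbourhood base at each point, and this
already forces weak convergence `m_n → μ`. On a separable space weak convergence is convergence in
the Lévy–Prokhorov metric, and the layer-cake formula bounds `|∫ f dν - ∫ f dμ|` by twice the
Lévy–Prokhorov distance of `ν` and `μ`, uniformly over `f ∈ 𝔅𝔏₁(E)`: a thickening by `ε` of a
superlevel set `{t ≤ f}` of a `K`-Lipschitz `f` lies in `{t ≤ f + Kε}`.
-/

open Set Metric BoundedContinuousFunction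

section LevyProkhorov

lemma LipschitzWith.thickening_setOf_le_subset {Ω : Type*} [PseudoMetricSpace Ω] {f : Ω → ℝ}
    {K : ℝ≥0} (hf : LipschitzWith K f) (ε t : ℝ) :
    thickening ε {x | t ≤ f x} ⊆ {x | t ≤ f x + K * ε} := by
  intro x hx
  obtain ⟨y, hty, hxy⟩ := mem_thickening_iff.1 hx
  have hfy : f y ≤ f x + K * dist x y := by
    have := hf.dist_le_mul x y
    rw [Real.dist_eq, abs_le] at this
    linarith [this.1]
  have : (K : ℝ) * dist x y ≤ K * ε := mul_le_mul_of_nonneg_left hxy.le K.coe_nonneg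
  exact (show t ≤ f y from hty).trans (by linarith)

variable {Ω : Type*} [MeasurableSpace Ω] [PseudoMetricSpace Ω] [OpensMeasurableSpace Ω]

lemma integral_le_integral_add_of_levyProkhorovEDist_lt (μ ν : Measure Ω) [IsProbabilityMeasure μ]
    [IsFiniteMeasure ν] {ε : ℝ} (hε : 0 < ε) (hμν : levyProkhorovEDist ν μ < ENNReal.ofReal ε)
    (g : Ω →ᵇ ℝ) (hg : 0 ≤ g) {K : ℝ≥0} (hK : LipschitzWith K g) :
    ∫ x, g x ∂ν ≤ ∫ x, g x ∂μ + K * ε + ε * ‖g‖ := by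
  set h : Ω →ᵇ ℝ := g + const Ω (K * ε)
  have hKε : 0 ≤ (K : ℝ) * ε := by positivity
  have h_nonneg : 0 ≤ h := fun x => add_nonneg (hg x) hKε
  have hgh : ‖g‖ ≤ ‖h‖ := (norm_le (norm_nonneg h)).2 fun x => by
    have hgx : 0 ≤ g x := hg x
    rw [Real.norm_of_nonneg hgx]
    exact (le_add_of_nonneg_right hKε).trans ((le_abs_self (h x)).trans (h.norm_coe_le_norm x))
  have h_anti : Antitone fun t => μ.real {x | t ≤ h x} :=
    fun s t hst => measureReal_mono fun x hx => hst.trans hx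
  calc ∫ x, g x ∂ν
      ≤ (∫ t in Ioc 0 ‖g‖, μ.real (thickening ε {x | t ≤ g x})) + ε * ‖g‖ :=
        integral_le_of_levyProkhorovEDist_lt ν μ hε hμν g (ae_of_all _ hg)
    _ ≤ (∫ t in Ioc 0 ‖g‖, μ.real {x | t ≤ h x}) + ε * ‖g‖ := by
        have thickening_anti : Antitone fun t => μ.real (thickening ε {x | t ≤ g x}) :=
          fun s t hst => measureReal_mono (thickening_subset_of_subset ε fun x hx => hst.trans hx)
        refine add_le_add_left (setIntegral_mono thickening_anti.intervalIntegrable.1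
          h_anti.intervalIntegrable.1 fun t => ?_) _
        exact measureReal_mono (hK.thickening_setOf_le_subset ε t)
    _ ≤ (∫ t in Ioc 0 ‖h‖, μ.real {x | t ≤ h x}) + ε * ‖g‖ :=
        add_le_add_left (setIntegral_mono_set h_anti.intervalIntegrable.1
          (ae_of_all _ fun t => measureReal_nonneg) (Ioc_subset_Ioc_right hgh).eventuallyLE) _
    _ = ∫ x, g x ∂μ + K * ε + ε * ‖g‖ := by
        rw [← integral_eq_integral_meas_le h μ (ae_of_all _ h_nonneg)]
        simp [h, integral_add (g.integrable μ) (integrable_const _)]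

lemma integral_sub_integral_le_of_levyProkhorovEDist_lt (μ ν : Measure Ω) [IsProbabilityMeasure μ]
    [IsProbabilityMeasure ν] {ε : ℝ} (hε : 0 < ε)
    (hμν : levyProkhorovEDist ν μ < ENNReal.ofReal ε)
    (f : Ω →ᵇ ℝ) {K : ℝ≥0} (hK : LipschitzWith K f) :
    ∫ x, f x ∂ν - ∫ x, f x ∂μ ≤ (K + 2 * ‖f‖) * ε := by
  set g : Ω →ᵇ ℝ := f + const Ω ‖f‖
  have hg : 0 ≤ g := fun x => show 0 ≤ f x + ‖f‖ from
    neg_le_iff_add_nonneg.1 (neg_le_of_abs_le (f.norm_coe_le_norm x))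
  have hgK : LipschitzWith K g :=
    (by simpa using hK.add (LipschitzWith.const ‖f‖) : LipschitzWith K fun x => f x + ‖f‖)
  have hg_norm : ‖g‖ ≤ 2 * ‖f‖ := by
    refine (norm_add_le _ _).trans ?_
    have := norm_const_le (α := Ω) ‖f‖
    rw [Real.norm_of_nonneg (norm_nonneg f)] at this
    linarith
  have hint (ρ : Measure Ω) [IsProbabilityMeasure ρ] : ∫ x, g x ∂ρ = ∫ x, f x ∂ρ + ‖f‖ := by
    simp [g, integral_add (f.integrable ρ) (integrable_const _)]
  have := integral_le_integral_add_of_levyProkhorovEDist_lt μ ν hε hμν g hg hgK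
  rw [hint, hint] at this
  nlinarith

lemma abs_integral_sub_integral_le_levyProkhorovDist {f : Ω →ᵇ ℝ} (hf : f ∈ BLball Ω)
    (μ ν : Measure Ω) [IsProbabilityMeasure μ] [IsProbabilityMeasure ν] :
    |∫ x, f x ∂ν - ∫ x, f x ∂μ| ≤ 2 * levyProkhorovDist ν μ := by
  obtain ⟨K, hK, hfK⟩ := hf
  suffices h : ∀ ε > levyProkhorovDist ν μ, |∫ x, f x ∂ν - ∫ x, f x ∂μ| ≤ 2 * ε by
    have : |∫ x, f x ∂ν - ∫ x, f x ∂μ| / 2 ≤ levyProkhorovDist ν μ :=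
      le_of_forall_gt_imp_ge_of_dense fun ε hε => by linarith [h ε hε]
    linarith
  intro ε hε
  have hε0 : 0 < ε := lt_of_le_of_lt ENNReal.toReal_nonneg hε
  have hνμ : levyProkhorovEDist ν μ < ENNReal.ofReal ε :=
    (ENNReal.lt_ofReal_iff_toReal_lt (levyProkhorovEDist_ne_top _ _)).2 hε
  have hμν : levyProkhorovEDist μ ν < ENNReal.ofReal ε := levyProkhorovEDist_comm ν μ ▸ hνμ
  have hcoef : ((K : ℝ) + 2 * ‖f‖) * ε ≤ 2 * ε := by nlinarith [K.coe_nonneg, norm_nonneg f]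
  rw [abs_sub_le_iff]
  exact ⟨(integral_sub_integral_le_of_levyProkhorovEDist_lt μ ν hε0 hνμ f hK).trans hcoef,
    (integral_sub_integral_le_of_levyProkhorovEDist_lt ν μ hε0 hμν f hK).trans hcoef⟩

lemma iSup_BLball_abs_integral_sub_le_levyProkhorovDist (μ ν : Measure Ω)
    [IsProbabilityMeasure μ] [IsProbabilityMeasure ν] :
    ⨆ f : BLball Ω, |∫ x, (f : Ω → ℝ) x ∂ν - ∫ x, (f : Ω → ℝ) x ∂μ| ≤
      2 * levyProkhorovDist ν μ :=
  Real.iSup_le (fun f => abs_integral_sub_integral_le_levyProkhorovDist f.2 μ ν)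
    (mul_nonneg zero_le_two ENNReal.toReal_nonneg)

end LevyProkhorov

lemma TopologicalSpace.exists_countable_isPiSystem_nhds_subset (X : Type*) [TopologicalSpace X]
    [SecondCountableTopology X] :
    ∃ S : Set (Set X), S.Countable ∧ IsPiSystem S ∧ (∀ s ∈ S, IsOpen s) ∧
      ∀ u, IsOpen u → ∀ x ∈ u, ∃ s ∈ S, s ∈ 𝓝 x ∧ s ⊆ u := by
  set B := countableBasis X
  refine ⟨(fun t => ⋂₀ t) '' {t | t.Finite ∧ t ⊆ B},
    (countable_ofPred_finite_subset (countable_countableBasis X)).image _, ?_, ?_, ?_⟩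
  · rintro _ ⟨t, ⟨ht, htB⟩, rfl⟩ _ ⟨t', ⟨ht', ht'B⟩, rfl⟩ -
    exact ⟨t ∪ t', ⟨ht.union ht', union_subset htB ht'B⟩, sInter_union t t'⟩
  · rintro _ ⟨t, ⟨ht, htB⟩, rfl⟩
    exact ht.isOpen_sInter fun b hb => isOpen_of_mem_countableBasis (htB hb)
  · intro u hu x hx
    obtain ⟨v, hvB, hxv, hvu⟩ := (isBasis_countableBasis X).exists_subset_of_mem_open hx hu
    refine ⟨v, ⟨{v}, ⟨finite_singleton v, singleton_subset_iff.2 hvB⟩, sInter_singleton v⟩,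
      (isOpen_of_mem_countableBasis hvB).mem_nhds hxv, hvu⟩

section Empirical

variable {E : Type*} [MeasurableSpace E]

lemma integral_empMeasure {φ : E → ℝ} (hφ : StronglyMeasurable φ) (n : ℕ) (x : ℕ → E) :
    ∫ y, φ y ∂(empMeasure E n x) = (∑ i ∈ Finset.range (n + 1), φ (x i)) / (n + 1) := by
  rw [empMeasure, integral_smul_measure, integral_finsetSum_measure
    fun i _ => integrable_dirac' hφ enorm_lt_top]
  have hcast : ((n : ℝ≥0∞) + 1).toReal = n + 1 := by norm_cast
  simp [integral_dirac' _ _ hφ, div_eq_inv_mul, hcast]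

variable {Ω : Type*} [MeasurableSpace Ω] {ℙ : Measure Ω} {X : ℕ → Ω → E} {μ : Measure E}

theorem ae_tendsto_integral_empMeasure (hX : ∀ i, Measurable (X i))
    (hindep : ProbabilityTheory.iIndepFun X ℙ) (hlaw : ∀ i, ℙ.map (X i) = μ)
    {φ : E → ℝ} (hφm : StronglyMeasurable φ) (hφ : Integrable φ μ) :
    ∀ᵐ ω ∂ℙ, Tendsto (fun n => ∫ y, φ y ∂(empMeasure E n (X · ω))) atTop (𝓝 (∫ y, φ y ∂μ)) := by
  have hident : ∀ i, ProbabilityTheory.IdentDistrib (φ ∘ X i) (φ ∘ X 0) ℙ ℙ := fun i =>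
    (⟨(hX i).aemeasurable, (hX 0).aemeasurable, by rw [hlaw i, hlaw 0]⟩ :
      ProbabilityTheory.IdentDistrib (X i) (X 0) ℙ ℙ).comp hφm.measurable
  have hint : Integrable (φ ∘ X 0) ℙ := by
    rw [← integrable_map_measure hφm.aestronglyMeasurable (hX 0).aemeasurable, hlaw 0]
    exact hφ
  have hmean : ∫ ω, (φ ∘ X 0) ω ∂ℙ = ∫ y, φ y ∂μ := by
    rw [← hlaw 0, integral_map (hX 0).aemeasurable hφm.aestronglyMeasurable]; rfl
  have slln := ProbabilityTheory.strong_law_ae_real (fun i => φ ∘ X i) hint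
    (fun i j hij => (hindep.comp (fun _ => φ) fun _ => hφm.measurable).indepFun hij) hident
  filter_upwards [slln] with ω hω
  rw [← hmean]
  refine (hω.comp (tendsto_add_atTop_nat 1)).congr fun n => ?_
  simp [integral_empMeasure hφm]

end Empirical

theorem ae_tendsto_empirical {E : Type*} [TopologicalSpace E] [SecondCountableTopology E]
    [MeasurableSpace E] [OpensMeasurableSpace E] {Ω : Type*} [MeasurableSpace Ω]
    {ℙ : Measure Ω} {X : ℕ → Ω → E} {μ : ProbabilityMeasure E} (hX : ∀ i, Measurable (X i))
    (hindep : ProbabilityTheory.iIndepFun X ℙ) (hlaw : ∀ i, ℙ.map (X i) = μ) :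
    ∀ᵐ ω ∂ℙ, Tendsto (fun n => empirical E n (X · ω)) atTop (𝓝 μ) := by
  obtain ⟨S, hS_count, hS_pi, hS_open, hS_nhds⟩ :=
    TopologicalSpace.exists_countable_isPiSystem_nhds_subset E
  have hS_meas : ∀ s ∈ S, MeasurableSet s := fun s hs => (hS_open s hs).measurableSet
  have h_sets : ∀ᵐ ω ∂ℙ, ∀ s ∈ S, Tendsto (fun n => empirical E n (X · ω) s) atTop (𝓝 (μ s)) := by
    refine (ae_ball_iff hS_count).2 fun s hs => ?_
    filter_upwards [ae_tendsto_integral_empMeasure hX hindep hlaw (φ := s.indicator 1)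
      (stronglyMeasurable_const.indicator (hS_meas s hs))
      ((integrable_const 1).indicator (hS_meas s hs))] with ω hω
    simp only [integral_indicator_one (hS_meas s hs)] at hω
    exact NNReal.tendsto_coe.1 hω
  filter_upwards [h_sets] with ω hω
  exact hS_pi.tendsto_probabilityMeasure_of_tendsto_of_mem hS_meas hS_nhds hω

lemma tendsto_levyProkhorovDist_of_tendsto {Ω ι : Type*} [PseudoMetricSpace Ω]
    [TopologicalSpace.SeparableSpace Ω] [MeasurableSpace Ω] [OpensMeasurableSpace Ω]
    {l : Filter ι} {μs : ι → ProbabilityMeasure Ω} {μ : ProbabilityMeasure Ω}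
    (h : Tendsto μs l (𝓝 μ)) :
    Tendsto (fun i => levyProkhorovDist (μs i : Measure Ω) μ) l (𝓝 0) :=
  tendsto_iff_dist_tendsto_zero.1
    ((LevyProkhorov.continuous_ofMeasure_probabilityMeasure.tendsto μ).comp h)

theorem blBall_universal_glivenko_cantelli_general (E : Type*) [MetricSpace E] [PolishSpace E]
    [MeasurableSpace E] [BorelSpace E]
    (ℙ : Measure (ℕ → E))
    (μ : ProbabilityMeasure E)
    (hindep : ProbabilityTheory.iIndepFun
      (fun i (ω : ℕ → E) => ω i) ℙ)
    (hlaw : ∀ i : ℕ, ℙ.map (fun ω => ω i) = (μ : Measure E)) :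
    ∀ᵐ ω ∂ℙ, Filter.Tendsto
      (fun n => ⨆ f : BLball E,
        |(∫ x, (f : E → ℝ) x ∂(empMeasure E n ω)) - ∫ x, (f : E → ℝ) x ∂(μ : Measure E)|)
      Filter.atTop (nhds 0) := by
  filter_upwards [ae_tendsto_empirical measurable_pi_apply hindep hlaw] with ω hω
  refine squeeze_zero (fun n => Real.iSup_nonneg fun f => abs_nonneg _)
    (fun n => iSup_BLball_abs_integral_sub_le_levyProkhorovDist (μ : Measure E)
      (empirical E n ω : Measure E)) ?_
  simpa using (tendsto_levyProkhorovDist_of_tendsto hω).const_mul 2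

/-- The unit ball `𝔅𝔏₁(E)` is a universal Glivenko–Cantelli class: whenever the coordinate
variables `ξ₁, ξ₂, …` on `Ω = E^ℕ` are independent with common law `μ ∈ 𝔐₁(E)`, one has
`ℙ`-almost surely that `sup { |∫f dm_n − ∫f dμ| : f ∈ 𝔅𝔏₁(E) } → 0` as `n → ∞`. -/
theorem blBall_universal_glivenko_cantelli (E : Type*) [MetricSpace E] [PolishSpace E]
    [MeasurableSpace E] [BorelSpace E]
    (ℙ : Measure (ℕ → E)) [IsProbabilityMeasure ℙ]
    (μ : ProbabilityMeasure E)
    (hindep : ProbabilityTheory.iIndepFun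
      (fun i (ω : ℕ → E) => ω i) ℙ)
    (hlaw : ∀ i : ℕ, ℙ.map (fun ω => ω i) = (μ : Measure E)) :
    ∀ᵐ ω ∂ℙ, Filter.Tendsto
      (fun n => ⨆ f : BLball E,
        |(∫ x, (f : E → ℝ) x ∂(empMeasure E n ω)) - ∫ x, (f : E → ℝ) x ∂(μ : Measure E)|)
      Filter.atTop (nhds 0) :=
  blBall_universal_glivenko_cantelli_general E ℙ μ hindep hlaw
end

section
/- If the sequence ξ = (ξ₁, ξ₂, …) is stationary, then ℙ-almost surely the empirical measures m_n converge to the canonical random measure υ in the weak topology, as n → ∞. -/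
/-!
Under stationarity the shift preserves `ℙ`, and the defining property of `υ` says that
`ω ↦ υ ω B` is the conditional expectation of `1{ω 0 ∈ B}` given the shift-invariant σ-algebra.
Birkhoff's pointwise ergodic theorem for that indicator therefore gives `m_n(B) → υ(B)` almost
surely, simultaneously for the countably many finite unions `B` of sets of a countable basis.
Every open set is a directed countable union of such finite unions, so `υ(G) ≤ liminf m_n(G)`
for all open `G`, which is weak convergence by the portmanteau theorem. Birkhoff's theorem itself
is proved from Hopf's maximal inequality, by Garsia's argument.
-/

open MeasureTheory Filter Topology
open scoped ENNReal NNReal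

/-- The shift operator `Σ(x₁,x₂,…) = (x₂,x₃,…)` on `E^ℕ`. -/
def shift {E : Type*} (ω : ℕ → E) : ℕ → E := fun n => ω (n + 1)

/-- The shift-invariant σ-algebra `ℐ = {I ∈ ℰ^ℕ : Σ⁻¹(I) = I}` on `E^ℕ` (identified, via the
coordinate process `ξ`, with `ξ⁻¹ℐ`). -/
def shiftInvariantSigma (E : Type*) [MeasurableSpace E] : MeasurableSpace (ℕ → E) where
  MeasurableSet' I := MeasurableSet I ∧ shift ⁻¹' I = I
  measurableSet_empty := ⟨MeasurableSet.empty, by simp⟩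
  measurableSet_compl := fun s hs => ⟨hs.1.compl, by rw [Set.preimage_compl, hs.2]⟩
  measurableSet_iUnion := fun s hs =>
    ⟨MeasurableSet.iUnion fun i => (hs i).1, by simp [Set.preimage_iUnion, fun i => (hs i).2]⟩

section BirkhoffMax

variable {α : Type*} {T : α → α} {g : α → ℝ}

theorem birkhoffAverage_sub_const (T : α → α) (h : α → ℝ) (c : ℝ) {n : ℕ} (hn : n ≠ 0) (x : α) :
    birkhoffAverage ℝ T (fun y => h y - c) n x = birkhoffAverage ℝ T h n x - c := by
  change birkhoffAverage ℝ T (h - fun _ => c) n x = _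
  rw [birkhoffAverage_sub, Pi.sub_apply, Pi.sub_apply,
    birkhoffAverage_of_comp_eq ℝ (g := fun _ => c) rfl (Nat.cast_ne_zero.2 hn)]

/-- `birkhoffMax T g n x = max (0, S₁ x, …, Sₙ x)` for the Birkhoff sums `Sₖ = birkhoffSum T g k`,
defined through the recursion that this maximum satisfies. -/
noncomputable def birkhoffMax (T : α → α) (g : α → ℝ) : ℕ → α → ℝ
  | 0 => 0
  | n + 1 => fun x => max 0 (g x + birkhoffMax T g n (T x))

theorem birkhoffMax_succ (n : ℕ) (x : α) :
    birkhoffMax T g (n + 1) x = max 0 (g x + birkhoffMax T g n (T x)) := rfl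

theorem birkhoffMax_nonneg : ∀ n x, 0 ≤ birkhoffMax T g n x
  | 0, _ => le_rfl
  | _ + 1, _ => le_max_left _ _

theorem birkhoffMax_le_succ : ∀ n x, birkhoffMax T g n x ≤ birkhoffMax T g (n + 1) x
  | 0, _ => birkhoffMax_nonneg 1 _
  | n + 1, x => max_le_max le_rfl (add_le_add le_rfl (birkhoffMax_le_succ n (T x)))

theorem monotone_birkhoffMax (x : α) : Monotone fun n => birkhoffMax T g n x :=
  monotone_nat_of_le_succ fun n => birkhoffMax_le_succ n x

theorem birkhoffSum_le_birkhoffMax : ∀ n x, birkhoffSum T g n x ≤ birkhoffMax T g n x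
  | 0, _ => le_rfl
  | n + 1, x => by
    rw [birkhoffSum_succ', birkhoffMax_succ]
    exact le_max_of_le_right (add_le_add le_rfl (birkhoffSum_le_birkhoffMax n (T x)))

theorem tendsto_birkhoffMax_apply_iff (x : α) :
    Tendsto (fun n => birkhoffMax T g n (T x)) atTop atTop ↔
      Tendsto (fun n => birkhoffMax T g n x) atTop atTop := by
  rw [← tendsto_add_atTop_iff_nat 1 (f := fun n => birkhoffMax T g n x)]
  simp only [birkhoffMax_succ]
  constructor
  · intro h
    exact tendsto_atTop_mono (fun n => le_max_right _ _) (tendsto_atTop_add_const_left _ _ h)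
  · intro h
    have hsum : Tendsto (fun n => g x + birkhoffMax T g n (T x)) atTop atTop :=
      h.congr' <| (h.eventually_gt_atTop 0).mono fun n hn =>
        max_eq_right (lt_max_iff.1 hn |>.resolve_left (lt_irrefl 0)).le
    simpa using tendsto_atTop_add_const_left _ (-g x) hsum

theorem tendsto_birkhoffMax_of_frequently_lt_birkhoffAverage {x : α} {ε : ℝ} (hε : 0 < ε)
    (hx : ∃ᶠ n in atTop, ε < birkhoffAverage ℝ T g n x) :
    Tendsto (fun n => birkhoffMax T g n x) atTop atTop := by
  refine (tendsto_atTop_atTop_iff_of_monotone (monotone_birkhoffMax x)).2 fun b => ?_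
  obtain ⟨n, hn, hnb⟩ := (hx.and_eventually (eventually_ge_atTop ⌈b / ε⌉₊)).exists
  have hn0 : n ≠ 0 := by rintro rfl; rw [birkhoffAverage_zero] at hn; linarith
  refine ⟨n, ?_⟩
  rw [birkhoffAverage, smul_eq_mul, lt_inv_mul_iff₀ (Nat.cast_pos.2 (Nat.pos_of_ne_zero hn0))] at hn
  calc b ≤ n * ε := (div_le_iff₀ hε).1 <| (Nat.le_ceil _).trans (by exact_mod_cast hnb)
    _ ≤ birkhoffSum T g n x := hn.le
    _ ≤ birkhoffMax T g n x := birkhoffSum_le_birkhoffMax n x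

theorem preimage_setOf_tendsto_birkhoffMax :
    T ⁻¹' {x | Tendsto (fun n => birkhoffMax T g n x) atTop atTop} =
      {x | Tendsto (fun n => birkhoffMax T g n x) atTop atTop} :=
  Set.ext tendsto_birkhoffMax_apply_iff

end BirkhoffMax

section MaximalErgodic

variable {α : Type*} [MeasurableSpace α] {μ : Measure α} {T : α → α} {g : α → ℝ}

theorem measurable_birkhoffMax (hT : Measurable T) (hg : Measurable g) :
    ∀ n, Measurable (birkhoffMax T g n)
  | 0 => measurable_const
  | n + 1 => measurable_const.max (hg.add ((measurable_birkhoffMax hT hg n).comp hT))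

theorem integrable_birkhoffMax (hT : MeasurePreserving T μ μ)
    (hg : Integrable g μ) : ∀ n, Integrable (birkhoffMax T g n) μ
  | 0 => integrable_zero _ _ _
  | n + 1 => (integrable_zero _ _ _).sup
      (hg.add ((hT.integrable_comp_of_integrable (integrable_birkhoffMax hT hg n))))

/-- **Hopf's maximal ergodic theorem**, by Garsia's argument: on `{0 < Mₙ}` one has
`Mₙ ≤ g + Mₙ ∘ T`, and `Mₙ` vanishes off that set. -/
theorem setIntegral_birkhoffMax_pos_nonneg (hT : MeasurePreserving T μ μ)
    (hgm : Measurable g) (hg : Integrable g μ) (n : ℕ) :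
    0 ≤ ∫ x in {x | 0 < birkhoffMax T g n x}, g x ∂μ := by
  set M := birkhoffMax T g n
  have hM : Integrable M μ := integrable_birkhoffMax hT hg n
  have hMT : Integrable (fun x => M (T x)) μ := hT.integrable_comp_of_integrable hM
  have hpos : MeasurableSet {x | 0 < M x} :=
    measurableSet_lt measurable_const (measurable_birkhoffMax hT.measurable hgm n)
  have hle : ∀ x ∈ {x | 0 < M x}, M x - M (T x) ≤ g x := fun x hx => by
    have hMx : M x ≤ max 0 (g x + M (T x)) := birkhoffMax_le_succ n x
    rcases le_max_iff.1 hMx with h | h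
    · exact absurd hx.out h.not_gt
    · linarith
  have hM_eq : ∫ x in {x | 0 < M x}, M x ∂μ = ∫ x, M x ∂μ :=
    setIntegral_eq_integral_of_forall_compl_eq_zero fun x hx =>
      le_antisymm (not_lt.1 hx) (birkhoffMax_nonneg n x)
  have hMT_le : ∫ x in {x | 0 < M x}, M (T x) ∂μ ≤ ∫ x, M (T x) ∂μ :=
    setIntegral_le_integral hMT (Eventually.of_forall fun x => birkhoffMax_nonneg n (T x))
  have hMT_eq : ∫ x, M (T x) ∂μ = ∫ x, M x ∂μ := by
    have hM' : AEStronglyMeasurable M (μ.map T) := by rw [hT.map_eq]; exact hM.1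
    rw [← integral_map hT.measurable.aemeasurable hM', hT.map_eq]
  calc 0 ≤ ∫ x in {x | 0 < M x}, (M x - M (T x)) ∂μ := by
        rw [integral_sub hM.integrableOn hMT.integrableOn]; linarith
    _ ≤ ∫ x in {x | 0 < M x}, g x ∂μ :=
        setIntegral_mono_on (hM.sub hMT).integrableOn hg.integrableOn hpos hle

theorem measurableSet_tendsto_birkhoffMax (hT : Measurable T) (hg : Measurable g) :
    MeasurableSet {x | Tendsto (fun n => birkhoffMax T g n x) atTop atTop} :=
  measurableSet_tendsto atTop (measurable_birkhoffMax hT hg)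

/-- Apply the maximal ergodic theorem to `μ` restricted to this invariant set, which the increasing
sets `{0 < Mₙ}` exhaust. -/
theorem setIntegral_tendsto_birkhoffMax_nonneg (hT : MeasurePreserving T μ μ)
    (hgm : Measurable g) (hg : Integrable g μ) :
    0 ≤ ∫ x in {x | Tendsto (fun n => birkhoffMax T g n x) atTop atTop}, g x ∂μ := by
  set A := {x | Tendsto (fun n => birkhoffMax T g n x) atTop atTop}
  have hA : MeasurableSet A := measurableSet_tendsto_birkhoffMax hT.measurable hgm
  have hTν : MeasurePreserving T (μ.restrict A) (μ.restrict A) := by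
    simpa only [A, preimage_setOf_tendsto_birkhoffMax] using hT.restrict_preimage hA
  set B : ℕ → Set α := fun n => {x | 0 < birkhoffMax T g n x}
  have hB : ∀ n, MeasurableSet (B n) := fun n =>
    measurableSet_lt measurable_const (measurable_birkhoffMax hT.measurable hgm n)
  have hBmono : Monotone B := fun n m hnm x hx => hx.out.trans_le (monotone_birkhoffMax x hnm)
  have hAB : (μ.restrict A).restrict (⋃ n, B n) = μ.restrict A :=
    Measure.restrict_eq_self_of_ae_mem <| ae_restrict_of_forall_mem hA fun x hx =>
      Set.mem_iUnion.2 (hx.eventually_gt_atTop 0).exists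
  have hlim := tendsto_setIntegral_of_monotone hB hBmono (hg.restrict (s := A)).integrableOn
  rw [hAB] at hlim
  exact ge_of_tendsto' hlim fun n =>
    setIntegral_birkhoffMax_pos_nonneg hTν hgm hg.restrict n

end MaximalErgodic

section PointwiseErgodic

variable {α : Type*} [MeasurableSpace α] {μ : Measure α} [IsFiniteMeasure μ] {T : α → α}

/-- Where the averages of `h` exceed `ε` infinitely often, the Birkhoff sums of `h - ε / 2` are
unbounded. That invariant set `A` has `0 ≤ ∫_A (h - ε / 2) ≤ -(ε / 2) μ A`, so it is null. -/
theorem ae_eventually_birkhoffAverage_le (hT : MeasurePreserving T μ μ) {h : α → ℝ}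
    (hhm : Measurable h) (hh : Integrable h μ)
    (hinv : ∀ A, MeasurableSet A → T ⁻¹' A = A → ∫ x in A, h x ∂μ ≤ 0) {ε : ℝ} (hε : 0 < ε) :
    ∀ᵐ x ∂μ, ∀ᶠ n in atTop, birkhoffAverage ℝ T h n x ≤ ε := by
  set g : α → ℝ := fun x => h x - ε / 2
  set A := {x | Tendsto (fun n => birkhoffMax T g n x) atTop atTop}
  have hgm : Measurable g := hhm.sub_const _
  have hA : MeasurableSet A := measurableSet_tendsto_birkhoffMax hT.measurable hgm
  have hμA : μ A = 0 := by
    have hpos := setIntegral_tendsto_birkhoffMax_nonneg hT hgm (hh.sub (integrable_const _))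
    rw [integral_sub hh.integrableOn (integrable_const _), setIntegral_const, smul_eq_mul] at hpos
    have hneg := hinv A hA preimage_setOf_tendsto_birkhoffMax
    have : μ.real A = 0 := by nlinarith [measureReal_nonneg (μ := μ) (s := A)]
    exact (measureReal_eq_zero_iff).1 this
  refine ae_iff.2 (measure_mono_null (fun x hx => ?_) hμA)
  refine tendsto_birkhoffMax_of_frequently_lt_birkhoffAverage (half_pos hε) ?_
  refine (not_eventually.1 hx).mono fun n hn => ?_
  have hn : ε < birkhoffAverage ℝ T h n x := not_le.1 hn
  have hn0 : n ≠ 0 := by rintro rfl; rw [birkhoffAverage_zero] at hn; linarith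
  rw [birkhoffAverage_sub_const T h _ hn0]
  linarith

theorem ae_tendsto_birkhoffAverage_zero (hT : MeasurePreserving T μ μ) {h : α → ℝ}
    (hhm : Measurable h) (hh : Integrable h μ)
    (hinv : ∀ A, MeasurableSet A → T ⁻¹' A = A → ∫ x in A, h x ∂μ = 0) :
    ∀ᵐ x ∂μ, Tendsto (fun n => birkhoffAverage ℝ T h n x) atTop (𝓝 0) := by
  have hbound : ∀ k : ℕ, ∀ᵐ x ∂μ, ∀ᶠ n in atTop, |birkhoffAverage ℝ T h n x| ≤ 1 / (k + 1) := by
    intro k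
    have hk : (0 : ℝ) < 1 / (k + 1) := Nat.one_div_pos_of_nat
    have hinv_neg : ∀ A, MeasurableSet A → T ⁻¹' A = A → ∫ x in A, (-h) x ∂μ ≤ 0 :=
      fun A hA hTA => by simp [integral_neg, hinv A hA hTA]
    filter_upwards
      [ae_eventually_birkhoffAverage_le hT hhm hh (fun A hA hTA => (hinv A hA hTA).le) hk,
        ae_eventually_birkhoffAverage_le hT hhm.neg hh.neg hinv_neg hk] with x hx hx_neg
    filter_upwards [hx, hx_neg] with n hn hn_neg
    rw [birkhoffAverage_neg, Pi.neg_apply, Pi.neg_apply] at hn_neg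
    exact abs_le.2 ⟨by linarith, hn⟩
  filter_upwards [ae_all_iff.2 hbound] with x hx
  refine Metric.tendsto_nhds.2 fun ε hε => ?_
  obtain ⟨k, hk⟩ := exists_nat_one_div_lt hε
  filter_upwards [hx k] with n hn
  rw [Real.dist_0_eq_abs]
  exact hn.trans_lt hk

/-- **Birkhoff's pointwise ergodic theorem**, with the limit `G` given as a version of the
conditional expectation of `f` on the invariant σ-algebra. -/
theorem ae_tendsto_birkhoffAverage (hT : MeasurePreserving T μ μ) {f G : α → ℝ}
    (hfm : Measurable f) (hf : Integrable f μ) (hGm : Measurable G) (hG : Integrable G μ)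
    (hGT : G ∘ T = G)
    (hfG : ∀ A, MeasurableSet A → T ⁻¹' A = A → ∫ x in A, f x ∂μ = ∫ x in A, G x ∂μ) :
    ∀ᵐ x ∂μ, Tendsto (fun n => birkhoffAverage ℝ T f n x) atTop (𝓝 (G x)) := by
  have hinv : ∀ A, MeasurableSet A → T ⁻¹' A = A → ∫ x in A, (f - G) x ∂μ = 0 :=
    fun A hA hTA => by
      rw [Pi.sub_def, integral_sub hf.integrableOn hG.integrableOn, hfG A hA hTA, sub_self]
  filter_upwards [ae_tendsto_birkhoffAverage_zero hT (hfm.sub hGm) (hf.sub hG) hinv] with x hx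
  have hsplit : ∀ᶠ n in atTop, birkhoffAverage ℝ T (f - G) n x + G x = birkhoffAverage ℝ T f n x :=
    (eventually_ne_atTop 0).mono fun n hn => by
      rw [birkhoffAverage_sub, Pi.sub_apply, Pi.sub_apply,
        birkhoffAverage_of_comp_eq ℝ hGT (Nat.cast_ne_zero.2 hn), sub_add_cancel]
  simpa using (hx.add_const (G x)).congr' hsplit

end PointwiseErgodic

section Shift

variable {E : Type*}

theorem shift_iterate_apply (ω : ℕ → E) (k i : ℕ) : shift^[k] ω i = ω (i + k) := by
  induction k generalizing ω with
  | zero => rfl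
  | succ k ih => rw [Function.iterate_succ_apply, ih]; rfl

variable [MeasurableSpace E]

theorem measurable_shift : Measurable (shift : (ℕ → E) → ℕ → E) :=
  measurable_pi_lambda _ fun n => measurable_pi_apply (n + 1)

theorem shiftInvariantSigma_le : shiftInvariantSigma E ≤ MeasurableSpace.pi :=
  fun _ hA => hA.1

theorem comp_shift_eq_of_measurable_shiftInvariantSigma {β : Type*} [MeasurableSpace β]
    [MeasurableSingletonClass β] {φ : (ℕ → E) → β} (hφ : Measurable[shiftInvariantSigma E] φ) :
    φ ∘ shift = φ := by
  funext ω
  have hω : ω ∈ shift ⁻¹' (φ ⁻¹' {φ (shift ω)}) := rfl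
  rw [(hφ (measurableSet_singleton _)).2] at hω
  exact hω.symm

theorem measureReal_empirical {B : Set E} (hB : MeasurableSet B) (n : ℕ) (ω : ℕ → E) :
    (empirical E n ω : Measure E).real B =
      birkhoffAverage ℝ shift (((fun ω : ℕ → E => ω 0) ⁻¹' B).indicator 1) (n + 1) ω := by
  change (empMeasure E n ω).real B = _
  simp only [empMeasure, measureReal_def, Measure.smul_apply, Measure.finsetSum_apply,
    Measure.dirac_apply' _ hB, smul_eq_mul, ENNReal.toReal_mul, ENNReal.toReal_inv,
    birkhoffAverage, birkhoffSum]
  rw [← Nat.cast_add_one, ENNReal.toReal_natCast,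
    ENNReal.toReal_sum fun i _ => by by_cases h : ω i ∈ B <;> simp [h]]
  refine congrArg _ (Finset.sum_congr rfl fun i _ => ?_)
  by_cases h : ω i ∈ B <;> simp [h, shift_iterate_apply]

theorem ae_tendsto_empirical_apply_s10 {ℙ : Measure (ℕ → E)} [IsFiniteMeasure ℙ]
    (hT : MeasurePreserving shift ℙ ℙ) {υ : (ℕ → E) → ProbabilityMeasure E} {B : Set E}
    (hB : MeasurableSet B) (hυmeas : Measurable[shiftInvariantSigma E] fun ω => (υ ω : Measure E) B)
    (hυcond : ∀ A, MeasurableSet[shiftInvariantSigma E] A →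
      ∫⁻ ω in A, (υ ω : Measure E) B ∂ℙ = ℙ (A ∩ {ω | ω 0 ∈ B})) :
    ∀ᵐ ω ∂ℙ,
      Tendsto (fun n => (empirical E n ω : Measure E) B) atTop (𝓝 ((υ ω : Measure E) B)) := by
  set C : Set (ℕ → E) := (fun ω => ω 0) ⁻¹' B
  set G : (ℕ → E) → ℝ := fun ω => ((υ ω : Measure E) B).toReal
  have hC : MeasurableSet C := measurable_pi_apply 0 hB
  have hυm : Measurable fun ω => (υ ω : Measure E) B := hυmeas.mono shiftInvariantSigma_le le_rfl
  have hG : Integrable G ℙ :=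
    .of_bound hυm.ennreal_toReal.aestronglyMeasurable 1 (ae_of_all _ fun ω => by
      rw [Real.norm_of_nonneg ENNReal.toReal_nonneg]; exact measureReal_le_one)
  have hGT : G ∘ shift = G := by
    change ENNReal.toReal ∘ ((fun ω => (υ ω : Measure E) B) ∘ shift) = _
    rw [comp_shift_eq_of_measurable_shiftInvariantSigma hυmeas]
    rfl
  have hfG : ∀ A, MeasurableSet A → shift ⁻¹' A = A →
      ∫ ω in A, C.indicator 1 ω ∂ℙ = ∫ ω in A, G ω ∂ℙ := fun A hA hTA => by
    rw [integral_indicator_one hC, measureReal_restrict_apply hC,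
      integral_toReal hυm.aemeasurable (ae_of_all _ fun ω => measure_lt_top _ _),
      hυcond A ⟨hA, hTA⟩, Set.inter_comm]
    rfl
  filter_upwards [ae_tendsto_birkhoffAverage hT (measurable_one.indicator hC)
    ((integrable_const 1).indicator hC) hυm.ennreal_toReal hG hGT hfG] with ω hω
  rw [← ENNReal.tendsto_toReal_iff (fun n => measure_ne_top _ _) (measure_ne_top _ _)]
  exact (hω.comp (tendsto_add_atTop_nat 1)).congr fun n => (measureReal_empirical hB n ω).symm

end Shift

theorem MeasureTheory.ProbabilityMeasure.tendsto_of_tendsto_measure_biUnion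
    {E : Type*} [TopologicalSpace E] [MeasurableSpace E] [OpensMeasurableSpace E]
    {b : ℕ → Set E} (hb : TopologicalSpace.IsTopologicalBasis (Set.range b))
    {μs : ℕ → ProbabilityMeasure E} {μ : ProbabilityMeasure E}
    (h : ∀ s : Finset ℕ, Tendsto (fun n => (μs n : Measure E) (⋃ i ∈ s, b i)) atTop
      (𝓝 ((μ : Measure E) (⋃ i ∈ s, b i)))) :
    Tendsto μs atTop (𝓝 μ) := by
  refine tendsto_of_forall_isOpen_le_liminf_nat' fun G hG => ?_
  set F : Set (Finset ℕ) := {s | ∀ i ∈ s, b i ⊆ G}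
  have hG_eq : G = ⋃ s ∈ F, ⋃ i ∈ s, b i := by
    refine subset_antisymm (fun x hx => ?_) (Set.iUnion₂_subset fun s hs => Set.iUnion₂_subset hs)
    obtain ⟨_, ⟨i, rfl⟩, hxi, hiG⟩ := hb.exists_subset_of_mem_open hx hG
    exact Set.mem_biUnion (x := {i}) (by simpa [F] using hiG) (by simpa using hxi)
  have hF : DirectedOn (Function.onFun (· ⊆ ·) fun s : Finset ℕ => ⋃ i ∈ s, b i) F :=
    fun s hs t ht => ⟨s ∪ t, fun i hi => (Finset.mem_union.1 hi).elim (hs i) (ht i),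
      Set.biUnion_subset_biUnion_left fun i => Finset.mem_union_left t,
      Set.biUnion_subset_biUnion_left fun i => Finset.mem_union_right s⟩
  calc (μ : Measure E) G = ⨆ s ∈ F, (μ : Measure E) (⋃ i ∈ s, b i) := by
        conv_lhs => rw [hG_eq]
        exact measure_biUnion_eq_iSup F.to_countable hF
    _ ≤ liminf (fun n => (μs n : Measure E) G) atTop := iSup₂_le fun s hs =>
        (h s).liminf_eq ▸ liminf_le_liminf (.of_forall fun n =>
          measure_mono (Set.iUnion₂_subset hs))

/-- If the coordinate sequence `ξ = (ξ₁, ξ₂, …)` on `Ω = E^ℕ` is stationary, then `ℙ`-almost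
surely the empirical measures `m_n` converge in the weak topology, as `n → ∞`, to the canonical
random measure `υ`, a regular version of the conditional distribution `ℙ[ξ₁ ∈ · | ξ⁻¹ℐ]`. -/
theorem empirical_tendsto_weak_of_stationary (E : Type*) [TopologicalSpace E] [PolishSpace E]
    [MeasurableSpace E] [BorelSpace E]
    (ℙ : Measure (ℕ → E)) [IsProbabilityMeasure ℙ]
    (hstat : ℙ.map shift = ℙ)
    (υ : (ℕ → E) → ProbabilityMeasure E)
    (hυmeas : ∀ B : Set E, MeasurableSet B →
      Measurable[shiftInvariantSigma E] fun ω => (υ ω : Measure E) B)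
    (hυcond : ∀ B : Set E, MeasurableSet B → ∀ A : Set (ℕ → E),
      MeasurableSet[shiftInvariantSigma E] A →
      ∫⁻ ω in A, (υ ω : Measure E) B ∂ℙ = ℙ (A ∩ {ω | ω 0 ∈ B})) :
    ∀ᵐ ω ∂ℙ, Filter.Tendsto (fun n => empirical E n ω) Filter.atTop (nhds (υ ω)) := by
  have hT : MeasurePreserving shift ℙ ℙ := ⟨measurable_shift, hstat⟩
  obtain ⟨b, hb⟩ := TopologicalSpace.exists_seq_basis E
  have hU : ∀ s : Finset ℕ, MeasurableSet (⋃ i ∈ s, b i) := fun s =>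
    (isOpen_biUnion fun i _ => hb.isOpen ⟨i, rfl⟩).measurableSet
  filter_upwards [ae_all_iff.2 fun s =>
    ae_tendsto_empirical_apply_s10 hT (hU s) (hυmeas _ (hU s)) (hυcond _ (hU s))] with ω hω
  exact ProbabilityMeasure.tendsto_of_tendsto_measure_biUnion hb hω
end
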